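/- arXiv:2206.09642 — 2 statements merged into one kernel-verified Lean document; each statement's English description precedes it below -/
import Mathlib

section
/- Fix M > 0 and 0 < ε ≤ 1/2. Define the Borel probability measures on [0,M]: ν̃ = (1/2)·δ_{M/2} + (1/2)·δ_M, μ₊ = (1/2 − ε)·δ_{M/2} + (1/2 + ε)·δ_M, and μ₋ = (1/2 + ε)·δ_{M/2} + (1/2 − ε)·δ_M. Then d_TV(ν̃,μ₊) = ε and d_TV(ν̃,μ₋) = ε, and for every price x ∈ [0,M], (1/2)·(opt(μ₊) − R(x,μ₊)) + (1/2)·(opt(μ₋) − R(x,μ₋)) ≥ M·ε/2. -/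
/-!
Moving mass `ε` from one atom of `ν̃` to the other costs exactly `ε` in total variation, and
`ν̃` is the midpoint of `μ₊` and `μ₋`. For any price `x ≤ M` the two revenues add up to at most
`M`: a price `x ≤ M/2` sells with probability one under both laws, a higher price sells with
total probability one across them. Meanwhile the price `M` earns `M (1/2 + ε)` under `μ₊` and
the price `M/2` earns `M/2` under `μ₋`, so the average regret is at least `M ε / 2`.
-/

open MeasureTheory

noncomputable section

/-- Expected pricing revenue `R(x,μ) = x · μ{ξ : ξ ≥ x}`. -/
def rev (x : ℝ) (μ : Measure ℝ) : ℝ := x * (μ {ξ : ℝ | x ≤ ξ}).toReal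

/-- Optimal revenue `opt(μ) = sup_{x ∈ [0,M]} R(x,μ)`. -/
def optRev (M : ℝ) (μ : Measure ℝ) : ℝ := ⨆ x : Set.Icc (0:ℝ) M, rev x.1 μ

/-- Total variation distance: `sup` over Borel sets `A` of `|μ(A) - ν(A)|`. -/
def tvDist (μ ν : Measure ℝ) : ℝ :=
  ⨆ A : {A : Set ℝ // MeasurableSet A}, |(μ A.1).toReal - (ν A.1).toReal|

def twoPoint {α : Type*} [MeasurableSpace α] (a : ℝ) (p : α) (b : ℝ) (q : α) : Measure α :=
  ENNReal.ofReal a • Measure.dirac p + ENNReal.ofReal b • Measure.dirac q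

section TwoPoint

variable {α : Type*} [MeasurableSpace α]

instance (a : ℝ) (p : α) (b : ℝ) (q : α) : IsFiniteMeasure (twoPoint a p b q) := by
  have := (Measure.dirac p).smul_finite (ENNReal.ofReal_ne_top (r := a))
  have := (Measure.dirac q).smul_finite (ENNReal.ofReal_ne_top (r := b))
  unfold twoPoint
  infer_instance

theorem toReal_twoPoint_apply [MeasurableSingletonClass α] {a b : ℝ} (ha : 0 ≤ a) (hb : 0 ≤ b)
    (p q : α) (s : Set α) :
    (twoPoint a p b q s).toReal = s.indicator (fun _ => a) p + s.indicator (fun _ => b) q := by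
  by_cases hp : p ∈ s <;> by_cases hq : q ∈ s <;>
    simp [twoPoint, Measure.dirac_apply, hp, hq, ha, hb, ENNReal.toReal_add]

end TwoPoint

theorem tvDist_twoPoint {p q : ℝ} (hpq : p ≠ q) {a b a' b' : ℝ} (ha : 0 ≤ a) (hb : 0 ≤ b)
    (ha' : 0 ≤ a') (hb' : 0 ≤ b') (hmass : a + b = a' + b') :
    tvDist (twoPoint a p b q) (twoPoint a' p b' q) = |b - b'| := by
  have hbound : ∀ A : {A : Set ℝ // MeasurableSet A},
      |(twoPoint a p b q A.1).toReal - (twoPoint a' p b' q A.1).toReal| ≤ |b - b'| := by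
    intro A
    rw [toReal_twoPoint_apply ha hb, toReal_twoPoint_apply ha' hb', abs_le]
    by_cases hp : p ∈ A.1 <;> by_cases hq : q ∈ A.1 <;> simp only [hp, hq, Set.indicator_of_mem,
      Set.indicator_of_notMem, not_false_eq_true] <;>
      constructor <;> linarith [le_abs_self (b - b'), neg_abs_le (b - b')]
  have hq : (twoPoint a p b q {q}).toReal - (twoPoint a' p b' q {q}).toReal = b - b' := by
    rw [toReal_twoPoint_apply ha hb, toReal_twoPoint_apply ha' hb']
    simp [hpq]
  refine le_antisymm (ciSup_le hbound) ?_
  refine le_ciSup_of_le ⟨|b - b'|, ?_⟩ ⟨{q}, measurableSet_singleton q⟩ (hq ▸ le_rfl)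
  rintro _ ⟨A, rfl⟩
  exact hbound A

theorem rev_twoPoint {a b : ℝ} (ha : 0 ≤ a) (hb : 0 ≤ b) (p q x : ℝ) :
    rev x (twoPoint a p b q) = x * ((if x ≤ p then a else 0) + (if x ≤ q then b else 0)) := by
  rw [rev, toReal_twoPoint_apply ha hb]
  simp only [Set.indicator, Set.mem_ofPred_eq]

theorem rev_le_mul_measureReal_univ {M x : ℝ} (hx : x ∈ Set.Icc 0 M) (μ : Measure ℝ)
    [IsFiniteMeasure μ] : rev x μ ≤ M * μ.real Set.univ :=
  mul_le_mul hx.2 (measureReal_mono (Set.subset_univ _)) ENNReal.toReal_nonneg (hx.1.trans hx.2)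

theorem rev_le_optRev {M x : ℝ} (hx : x ∈ Set.Icc 0 M) (μ : Measure ℝ) [IsFiniteMeasure μ] :
    rev x μ ≤ optRev M μ := by
  refine le_ciSup (f := fun y : Set.Icc 0 M => rev y.1 μ) ⟨M * μ.real Set.univ, ?_⟩ ⟨x, hx⟩
  rintro _ ⟨y, rfl⟩
  exact rev_le_mul_measureReal_univ y.2 μ

theorem rev_twoPoint_add_rev_twoPoint_swap_le {M a b x : ℝ} (ha : 0 ≤ a) (hb : 0 ≤ b)
    (hab : a + b = 1) (hx : x ∈ Set.Icc 0 M) :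
    rev x (twoPoint a (M / 2) b M) + rev x (twoPoint b (M / 2) a M) ≤ M := by
  obtain ⟨hx0, hxM⟩ := hx
  rw [rev_twoPoint ha hb, rev_twoPoint hb ha, if_pos hxM, if_pos hxM]
  split_ifs <;> nlinarith

/-- Two-point Bayesian lower bound of order `Mε` for pricing under total variation
heterogeneity. -/
theorem pricing_tv_lower_bound
    (M ε : ℝ) (hM : 0 < M) (hε : 0 < ε) (hε2 : ε ≤ 1/2)
    (νt μp μm : Measure ℝ)
    (hνt : νt = ENNReal.ofReal (1/2) • Measure.dirac (M / 2) +
                ENNReal.ofReal (1/2) • Measure.dirac M)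
    (hμp : μp = ENNReal.ofReal (1/2 - ε) • Measure.dirac (M / 2) +
                ENNReal.ofReal (1/2 + ε) • Measure.dirac M)
    (hμm : μm = ENNReal.ofReal (1/2 + ε) • Measure.dirac (M / 2) +
                ENNReal.ofReal (1/2 - ε) • Measure.dirac M) :
    tvDist νt μp = ε ∧ tvDist νt μm = ε ∧
    ∀ x ∈ Set.Icc (0:ℝ) M,
      (1/2) * (optRev M μp - rev x μp) + (1/2) * (optRev M μm - rev x μm) ≥
        M * ε / 2 := by
  obtain rfl : νt = twoPoint (1/2) (M / 2) (1/2) M := hνt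
  obtain rfl : μp = twoPoint (1/2 - ε) (M / 2) (1/2 + ε) M := hμp
  obtain rfl : μm = twoPoint (1/2 + ε) (M / 2) (1/2 - ε) M := hμm
  have hhalf : (0:ℝ) ≤ 1/2 := by norm_num
  have hlo : 0 ≤ 1/2 - ε := by linarith
  have hhi : 0 ≤ 1/2 + ε := by linarith
  have hpq : M / 2 ≠ M := (half_lt_self hM).ne
  refine ⟨?_, ?_, fun x hx => ?_⟩
  · rw [tvDist_twoPoint hpq hhalf hhalf hlo hhi (by ring), sub_add_cancel_left, abs_neg,
      abs_of_pos hε]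
  · rw [tvDist_twoPoint hpq hhalf hhalf hhi hlo (by ring), sub_sub_cancel, abs_of_pos hε]
  have hopt_p : M * (1/2 + ε) ≤ optRev M (twoPoint (1/2 - ε) (M / 2) (1/2 + ε) M) := by
    calc M * (1/2 + ε) = rev M (twoPoint (1/2 - ε) (M / 2) (1/2 + ε) M) := by
          rw [rev_twoPoint hlo hhi, if_neg (half_lt_self hM).not_ge, if_pos le_rfl, zero_add]
      _ ≤ _ := rev_le_optRev ⟨hM.le, le_rfl⟩ _
  have hopt_m : M / 2 ≤ optRev M (twoPoint (1/2 + ε) (M / 2) (1/2 - ε) M) := by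
    calc M / 2 = rev (M / 2) (twoPoint (1/2 + ε) (M / 2) (1/2 - ε) M) := by
          rw [rev_twoPoint hhi hlo, if_pos le_rfl, if_pos (half_le_self hM.le)]
          ring
      _ ≤ _ := rev_le_optRev ⟨(half_pos hM).le, half_le_self hM.le⟩ _
  have hrev := rev_twoPoint_add_rev_twoPoint_swap_le hlo hhi (by ring) hx
  linarith

end
end

section
/- Fix M > 0 and b > 0. Let μ and ν be Borel probability measures on [0,M] and let x₁, x₂ satisfy 0 ≤ x₁ < x₂ ≤ M. Then S(x₂,μ) − S(x₁,ν) ≤ b·d_W(μ,ν)/(x₂ − x₁) + d_W(μ,ν) + (x₂ − x₁). -/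
/-! For a measure carried by `[0, ∞)`, the layer-cake formula applied to `min ξ x` gives
`S(x, μ) = x + b (1 - F x) - ∫₀ˣ F`. Hence `S(x₂, μ) - S(x₁, ν)` equals
`(x₂ - x₁) + b (H x₁ - F x₂) + ∫₀^{x₁} (H - F) - ∫_{x₁}^{x₂} F`: the last integral is nonnegative,
the one before it is at most `d_W(μ, ν)`, and monotonicity of `F` and `H` gives
`(x₂ - x₁) (H x₁ - F x₂) ≤ ∫_{x₁}^{x₂} (H - F) ≤ d_W(μ, ν)`. -/

open MeasureTheory

noncomputable section

/-- Cumulative distribution function `F(t) = μ([0,t])`. -/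
def cdf0 (μ : Measure ℝ) (t : ℝ) : ℝ := (μ (Set.Icc 0 t)).toReal

/-- Wasserstein-1 distance between measures on `[0,M]`: `∫₀^M |F(t) - H(t)| dt`. -/
def wassDist (M : ℝ) (μ ν : Measure ℝ) : ℝ :=
  ∫ t in Set.Icc (0:ℝ) M, |cdf0 μ t - cdf0 ν t|

/-- Expected ski-rental cost with buying cost `b`. -/
def skiCost (b x : ℝ) (μ : Measure ℝ) : ℝ :=
  ∫ ξ, (if ξ ≤ x then ξ else b + x) ∂μ

open Set

section cdf

variable (μ : Measure ℝ)

lemma cdf0_nonneg (t : ℝ) : 0 ≤ cdf0 μ t := ENNReal.toReal_nonneg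

lemma cdf0_mono [IsFiniteMeasure μ] : Monotone (cdf0 μ) := fun _ _ h =>
  measureReal_mono (Icc_subset_Icc_right h)

variable {μ}

lemma cdf0_eq_measureReal_Iic (h0 : ∀ᵐ ξ ∂μ, 0 ≤ ξ) (t : ℝ) :
    cdf0 μ t = μ.real (Iic t) := by
  refine congrArg ENNReal.toReal (measure_congr ?_)
  filter_upwards [h0] with ξ hξ
  change (ξ ∈ Icc 0 t) = (ξ ∈ Iic t)
  simp [hξ]

lemma measureReal_Ioi_eq_one_sub_cdf0 [IsProbabilityMeasure μ] (h0 : ∀ᵐ ξ ∂μ, 0 ≤ ξ) (t : ℝ) :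
    μ.real (Ioi t) = 1 - cdf0 μ t := by
  rw [cdf0_eq_measureReal_Iic h0, ← compl_Iic, measureReal_compl measurableSet_Iic,
    probReal_univ]

end cdf

section skiCost

variable {μ : Measure ℝ} {x : ℝ}

lemma measureReal_lt_min_eq_indicator (t : ℝ) :
    μ.real {ξ | t < min ξ x} = (Iio x).indicator (fun t => μ.real (Ioi t)) t := by
  by_cases htx : t < x <;> simp [htx, Ioi]

lemma integrable_min [IsFiniteMeasure μ] (h0 : ∀ᵐ ξ ∂μ, 0 ≤ ξ) (hx : 0 ≤ x) :
    Integrable (fun ξ => min ξ x) μ := by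
  refine Integrable.of_bound (by fun_prop) x ?_
  filter_upwards [h0] with ξ hξ
  rw [Real.norm_of_nonneg (le_min hξ hx)]
  exact min_le_right ξ x

lemma integral_min_eq_intervalIntegral [IsFiniteMeasure μ] (h0 : ∀ᵐ ξ ∂μ, 0 ≤ ξ) (hx : 0 ≤ x) :
    ∫ ξ, min ξ x ∂μ = ∫ t in 0..x, μ.real (Ioi t) := by
  have hnn : 0 ≤ᵐ[μ] fun ξ => min ξ x := by
    filter_upwards [h0] with ξ hξ using le_min hξ hx
  rw [(integrable_min h0 hx).integral_eq_integral_meas_lt hnn, intervalIntegral.integral_of_le hx,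
    integral_Ioc_eq_integral_Ioo]
  simp_rw [measureReal_lt_min_eq_indicator]
  rw [setIntegral_indicator measurableSet_Iio, Ioi_inter_Iio]

lemma skiCost_eq [IsProbabilityMeasure μ] (b : ℝ) (h0 : ∀ᵐ ξ ∂μ, 0 ≤ ξ) (hx : 0 ≤ x) :
    skiCost b x μ = x + b * (1 - cdf0 μ x) - ∫ t in 0..x, cdf0 μ t := by
  have hsplit : (fun ξ => if ξ ≤ x then ξ else b + x) =
      fun ξ => min ξ x + (Ioi x).indicator (fun _ => b) ξ := by
    ext ξ
    by_cases hξ : ξ ≤ x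
    · simp [hξ]
    · rw [if_neg hξ, min_eq_right (not_le.1 hξ).le,
        indicator_of_mem (show ξ ∈ Ioi x from not_le.1 hξ), add_comm]
  have hmin : ∫ ξ, min ξ x ∂μ = x - ∫ t in 0..x, cdf0 μ t := by
    simp_rw [integral_min_eq_intervalIntegral h0 hx, measureReal_Ioi_eq_one_sub_cdf0 h0]
    rw [intervalIntegral.integral_sub intervalIntegrable_const (cdf0_mono μ).intervalIntegrable,
      intervalIntegral.integral_const, sub_zero, smul_eq_mul, mul_one]
  rw [skiCost, hsplit, integral_add _ ((integrable_const b).indicator measurableSet_Ioi),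
    integral_indicator_const _ measurableSet_Ioi, hmin, measureReal_Ioi_eq_one_sub_cdf0 h0,
    smul_eq_mul]
  · ring
  · exact integrable_min h0 hx

end skiCost

lemma mul_sub_le_intervalIntegral_sub {f g : ℝ → ℝ} (hf : Monotone f) (hg : Monotone g) {a c : ℝ}
    (hac : a ≤ c) : (c - a) * (g a - f c) ≤ (∫ t in a..c, g t) - ∫ t in a..c, f t := by
  rw [← intervalIntegral.integral_sub hg.intervalIntegrable hf.intervalIntegrable,
    ← smul_eq_mul, ← intervalIntegral.integral_const]
  exact intervalIntegral.integral_mono_on hac intervalIntegrable_const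
    (hg.intervalIntegrable.sub hf.intervalIntegrable) fun t ht => sub_le_sub (hg ht.1) (hf ht.2)

lemma intervalIntegral_cdf0_sub_le_wassDist {μ ν : Measure ℝ} [IsFiniteMeasure μ]
    [IsFiniteMeasure ν] {M a c : ℝ} (ha : 0 ≤ a) (hac : a ≤ c) (hc : c ≤ M) :
    (∫ t in a..c, cdf0 ν t) - ∫ t in a..c, cdf0 μ t ≤ wassDist M μ ν := by
  have hint : ∀ ρ : Measure ℝ, [IsFiniteMeasure ρ] → IntegrableOn (cdf0 ρ) (Icc 0 M) :=
    fun ρ _ => (cdf0_mono ρ).locallyIntegrable.integrableOn_isCompact isCompact_Icc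
  have habs : IntegrableOn (fun t => |cdf0 μ t - cdf0 ν t|) (Icc 0 M) :=
    ((hint μ).sub (hint ν)).abs
  have hsub : Ioc a c ⊆ Icc 0 M := fun t ht => ⟨ha.trans ht.1.le, ht.2.trans hc⟩
  rw [← intervalIntegral.integral_sub (cdf0_mono ν).intervalIntegrable
    (cdf0_mono μ).intervalIntegrable, intervalIntegral.integral_of_le hac]
  calc ∫ t in Ioc a c, (cdf0 ν t - cdf0 μ t)
      ≤ ∫ t in Ioc a c, |cdf0 μ t - cdf0 ν t| :=
        setIntegral_mono_on (((hint ν).sub (hint μ)).mono_set hsub)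
          (habs.mono_set hsub) measurableSet_Ioc
          fun t _ => abs_sub_comm (cdf0 μ t) (cdf0 ν t) ▸ le_abs_self _
    _ ≤ wassDist M μ ν :=
        setIntegral_mono_set habs (ae_of_all _ fun _ => abs_nonneg _)
          hsub.eventuallyLE

lemma ae_nonneg_of_measure_Icc_eq_one {μ : Measure ℝ} [IsProbabilityMeasure μ] {M : ℝ}
    (hμ : μ (Icc 0 M) = 1) : ∀ᵐ ξ ∂μ, 0 ≤ ξ := by
  filter_upwards [(mem_ae_iff_prob_eq_one measurableSet_Icc).2 hμ] with ξ hξ using hξ.1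

theorem ski_rental_cross_difference_general
    (M b : ℝ) (hb : 0 < b)
    (μ ν : Measure ℝ) [IsProbabilityMeasure μ] [IsProbabilityMeasure ν]
    (hμ : μ (Set.Icc 0 M) = 1) (hν : ν (Set.Icc 0 M) = 1)
    (x₁ x₂ : ℝ) (hx₁ : 0 ≤ x₁) (h12 : x₁ < x₂) (hx₂ : x₂ ≤ M) :
    skiCost b x₂ μ - skiCost b x₁ ν ≤
      b * wassDist M μ ν / (x₂ - x₁) + wassDist M μ ν + (x₂ - x₁) := by
  set D := wassDist M μ ν
  have hgap : 0 < x₂ - x₁ := sub_pos.2 h12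
  have hbelow : (∫ t in 0..x₁, cdf0 ν t) - ∫ t in 0..x₁, cdf0 μ t ≤ D :=
    intervalIntegral_cdf0_sub_le_wassDist le_rfl hx₁ (h12.le.trans hx₂)
  have htail : 0 ≤ ∫ t in x₁..x₂, cdf0 μ t :=
    intervalIntegral.integral_nonneg h12.le fun t _ => cdf0_nonneg μ t
  have hjump : b * (cdf0 ν x₁ - cdf0 μ x₂) ≤ b * D / (x₂ - x₁) := by
    rw [mul_div_assoc]
    refine mul_le_mul_of_nonneg_left ?_ hb.le
    rw [le_div_iff₀' hgap]
    exact (mul_sub_le_intervalIntegral_sub (cdf0_mono μ) (cdf0_mono ν) h12.le).trans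
      (intervalIntegral_cdf0_sub_le_wassDist hx₁ h12.le hx₂)
  rw [skiCost_eq b (ae_nonneg_of_measure_Icc_eq_one hμ) (hx₁.trans h12.le),
    skiCost_eq b (ae_nonneg_of_measure_Icc_eq_one hν) hx₁,
    ← intervalIntegral.integral_add_adjacent_intervals (b := x₁)
      (cdf0_mono μ).intervalIntegrable (cdf0_mono μ).intervalIntegrable]
  linarith

/-- Cross comparison of ski-rental costs at two rental durations `x₁ < x₂` under two
distributions, via the Wasserstein distance. -/
theorem ski_rental_cross_difference
    (M b : ℝ) (hM : 0 < M) (hb : 0 < b)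
    (μ ν : Measure ℝ) [IsProbabilityMeasure μ] [IsProbabilityMeasure ν]
    (hμ : μ (Set.Icc 0 M) = 1) (hν : ν (Set.Icc 0 M) = 1)
    (x₁ x₂ : ℝ) (hx₁ : 0 ≤ x₁) (h12 : x₁ < x₂) (hx₂ : x₂ ≤ M) :
    skiCost b x₂ μ - skiCost b x₁ ν ≤
      b * wassDist M μ ν / (x₂ - x₁) + wassDist M μ ν + (x₂ - x₁) :=
  ski_rental_cross_difference_general M b hb μ ν hμ hν x₁ x₂ hx₁ h12 hx₂

end
end
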